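/- The Cesàro operator on C_l([0,∞]) is not mean ergodic: there exists f ∈ C_l([0,∞]) (e.g. f(x) = cos(x)/(x+1)) such that the Cesàro means C_{[n]}f = (1/n)Σ_{k=1}^n C^k f do not converge in C_l([0,∞]). -/

import Mathlib

/-!
If the Cesàro means `C_[n] f` converged uniformly to some `g`, then `g` would be a fixed point
of `C`, because `C (C_[n] f) - C_[n] f = (C^{n+1} f - C f) / n → 0`. Since `x (C g)' = g - C g`,
a continuous fixed point has derivative zero on `(0, ∞)` and is therefore constant. But `C`
preserves both the value at `0` and the limit at `∞`, so `g 0 = f 0` and `g (∞) = f (∞)`, which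
is impossible when `f 0 ≠ f (∞)`.
-/

open MeasureTheory

/-- The Cesàro average: `ces f x = (1/x) ∫₀ˣ f(t) dt` for `x ≠ 0`, `ces f 0 = f 0`. -/
noncomputable def ces (f : ℝ → ℂ) (x : ℝ) : ℂ :=
  if x = 0 then f 0 else (∫ t in (0:ℝ)..x, f t) / (x : ℂ)

open Set Filter Topology

theorem exists_norm_le_of_tendsto {E : Type*} [SeminormedAddCommGroup E] {f : ℝ → E} {L : E}
    (hf : ContinuousOn f (Ici 0)) (hL : Tendsto f atTop (𝓝 L)) :
    ∃ C, ∀ x, 0 ≤ x → ‖f x‖ ≤ C := by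
  obtain ⟨A, hA⟩ := eventually_atTop.1 (hL.norm.eventually (gt_mem_nhds (lt_add_one ‖L‖)))
  obtain ⟨C, hC⟩ := isCompact_Icc.exists_bound_of_continuousOn (hf.mono fun t ht => ht.1)
  refine ⟨max C (‖L‖ + 1), fun x hx => ?_⟩
  rcases le_total x A with hxA | hxA
  · exact (hC x ⟨hx, hxA⟩).trans (le_max_left _ _)
  · exact (hA x hxA).le.trans (le_max_right _ _)

section Ces

variable {f : ℝ → ℂ} {L : ℂ} {C x : ℝ}

theorem ces_zero (f : ℝ → ℂ) : ces f 0 = f 0 := if_pos rfl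

theorem ces_eq_integral_comp_mul (f : ℝ → ℂ) (x : ℝ) :
    ces f x = ∫ s in (0:ℝ)..1, f (x * s) := by
  rcases eq_or_ne x 0 with rfl | hx
  · simp [ces_zero]
  · rw [intervalIntegral.integral_comp_mul_left _ hx, ces, if_neg hx, mul_zero, mul_one,
      Complex.real_smul, div_eq_inv_mul, Complex.ofReal_inv]

theorem continuousOn_ces (hf : ContinuousOn f (Ici 0)) : ContinuousOn (ces f) (Ici 0) := by
  have hf' : Continuous fun y => f (max y 0) :=
    hf.comp_continuous (continuous_id.max continuous_const) fun y => le_max_right y 0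
  have hpar := intervalIntegral.continuous_parametric_intervalIntegral_of_continuous'
    (μ := volume) (f := fun x s => f (max (x * s) 0)) (hf'.comp (continuous_fst.mul continuous_snd))
    0 1
  refine hpar.continuousOn.congr fun x hx => ?_
  rw [ces_eq_integral_comp_mul]
  refine intervalIntegral.integral_congr fun s hs => ?_
  rw [uIcc_of_le zero_le_one] at hs
  simp only [max_eq_left (mul_nonneg hx hs.1)]

theorem norm_ces_le (hC : ∀ x, 0 ≤ x → ‖f x‖ ≤ C) (hx : 0 ≤ x) : ‖ces f x‖ ≤ C := by
  rw [ces_eq_integral_comp_mul]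
  have := intervalIntegral.norm_integral_le_of_norm_le_const (a := (0:ℝ)) (b := 1)
    (f := fun s => f (x * s)) fun s hs => by
      rw [uIoc_of_le zero_le_one] at hs
      exact hC _ (mul_nonneg hx hs.1.le)
  simpa using this

theorem tendsto_ces (hf : ContinuousOn f (Ici 0)) (hL : Tendsto f atTop (𝓝 L)) :
    Tendsto (ces f) atTop (𝓝 L) := by
  obtain ⟨C, hC⟩ := exists_norm_le_of_tendsto hf hL
  have hpos : ∀ s ∈ uIoc (0:ℝ) 1, 0 < s := fun s hs =>
    (uIoc_of_le (zero_le_one (α := ℝ)) ▸ hs).1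
  simp_rw [funext (ces_eq_integral_comp_mul f)]
  have := intervalIntegral.tendsto_integral_filter_of_dominated_convergence (μ := volume)
    (a := 0) (b := 1) (l := atTop) (F := fun x s => f (x * s)) (f := fun _ => L) (fun _ => C)
    ?_ ?_ intervalIntegrable_const ?_
  · simpa using this
  · filter_upwards [eventually_ge_atTop 0] with x hx
    exact ContinuousOn.aestronglyMeasurable (hf.comp (continuous_const_mul x).continuousOn
      fun s hs => mul_nonneg hx (hpos s hs).le) measurableSet_uIoc
  · filter_upwards [eventually_ge_atTop 0] with x hx
    exact ae_of_all _ fun s hs => hC _ (mul_nonneg hx (hpos s hs).le)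
  · exact ae_of_all _ fun s hs => hL.comp (tendsto_id.atTop_mul_const (hpos s hs))

theorem hasDerivAt_ces (hf : ContinuousOn f (Ici 0)) (hx : 0 < x) :
    HasDerivAt (ces f) ((f x - ces f x) / x) x := by
  have hfx : ContinuousAt f x := hf.continuousAt (Ici_mem_nhds hx)
  have hprim : HasDerivAt (fun y => ∫ t in (0:ℝ)..y, f t) (f x) x :=
    intervalIntegral.integral_hasDerivAt_right
      (hf.mono fun t ht => (uIcc_of_le hx.le ▸ ht).1).intervalIntegrable
      ((hf.mono Ioi_subset_Ici_self).stronglyMeasurableAtFilter isOpen_Ioi x hx) hfx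
  have hx' : (x : ℂ) ≠ 0 := Complex.ofReal_ne_zero.2 hx.ne'
  have heq : ces f =ᶠ[𝓝 x] fun y => (∫ t in (0:ℝ)..y, f t) / (y : ℂ) := by
    filter_upwards [Ioi_mem_nhds hx] with y hy using if_neg (ne_of_gt hy)
  refine ((hprim.div (hasDerivAt_id x).ofReal_comp hx').congr_of_eventuallyEq heq).congr_deriv ?_
  rw [ces, if_neg hx.ne', id, Complex.ofReal_one, mul_one]
  field_simp

theorem eqOn_const_of_ces_eq (hf : ContinuousOn f (Ici 0))
    (hfix : ∀ x, 0 < x → ces f x = f x) : EqOn f (fun _ => f 0) (Ici 0) := by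
  have hconst : EqOn f (fun _ => f 1) (Ioi 0) := fun x hx => by
    rw [← hfix x hx, ← hfix 1 one_pos]
    refine isOpen_Ioi.is_const_of_deriv_eq_zero isPreconnected_Ioi
      (fun y hy => (hasDerivAt_ces hf hy).differentiableAt.differentiableWithinAt)
      (fun y hy => ?_) hx (mem_Ioi.2 one_pos)
    rw [(hasDerivAt_ces hf hy).deriv, hfix y hy, sub_self, zero_div, Pi.zero_apply]
  have hext := hconst.of_subset_closure hf continuousOn_const Ioi_subset_Ici_self
    (closure_Ioi (0:ℝ)).ge
  intro x hx
  rw [hext hx, hext (self_mem_Ici (a := (0:ℝ)))]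

theorem tendsto_ces_of_tendstoUniformlyOn {ι : Type*} {l : Filter ι} [l.IsCountablyGenerated]
    {F : ι → ℝ → ℂ} (hF : ∀ i, ContinuousOn (F i) (Ici 0))
    (hFg : TendstoUniformlyOn F f l (Ici 0)) (hx : 0 < x) :
    Tendsto (fun i => ces (F i) x) l (𝓝 (ces f x)) := by
  have hsub : uIcc 0 x ⊆ Ici 0 := fun t ht => (uIcc_of_le hx.le ▸ ht).1
  simp only [ces, if_neg hx.ne']
  exact ((hFg.mono hsub).tendsto_intervalIntegral_of_continuousOn (μ := volume)
    (Eventually.of_forall fun i => (hF i).mono hsub)).div_const _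

end Ces

section CesaroMean

variable {f : ℝ → ℂ} {L : ℂ} {n : ℕ} {x : ℝ}

noncomputable def cesaroMean (f : ℝ → ℂ) (n : ℕ) : ℝ → ℂ :=
  fun x => (n : ℂ)⁻¹ • ∑ k ∈ Finset.Icc 1 n, (ces^[k] f) x

theorem continuousOn_ces_iterate (hf : ContinuousOn f (Ici 0)) (k : ℕ) :
    ContinuousOn (ces^[k] f) (Ici 0) :=
  Function.Iterate.rec (fun h => ContinuousOn h (Ici 0)) hf (fun _ => continuousOn_ces) k

theorem tendsto_ces_iterate (hf : ContinuousOn f (Ici 0)) (hL : Tendsto f atTop (𝓝 L))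
    (k : ℕ) : Tendsto (ces^[k] f) atTop (𝓝 L) := by
  induction k with
  | zero => exact hL
  | succ k ih =>
    rw [Function.iterate_succ_apply']
    exact tendsto_ces (continuousOn_ces_iterate hf k) ih

theorem norm_ces_iterate_le {C : ℝ} (hC : ∀ x, 0 ≤ x → ‖f x‖ ≤ C) (k : ℕ) :
    ∀ x, 0 ≤ x → ‖(ces^[k] f) x‖ ≤ C :=
  Function.Iterate.rec (fun h : ℝ → ℂ => ∀ x, 0 ≤ x → ‖h x‖ ≤ C) hC
    (fun _ hh _ => norm_ces_le hh) k

theorem ces_iterate_zero (k : ℕ) : (ces^[k] f) 0 = f 0 :=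
  Function.Iterate.rec (fun h => h 0 = f 0) rfl (fun h hh => (ces_zero h).trans hh) k

theorem continuousOn_cesaroMean (hf : ContinuousOn f (Ici 0)) (n : ℕ) :
    ContinuousOn (cesaroMean f n) (Ici 0) :=
  (continuousOn_finsetSum _ fun k _ => continuousOn_ces_iterate hf k).const_smul (n : ℂ)⁻¹

theorem cesaroMean_zero (hn : n ≠ 0) : cesaroMean f n 0 = f 0 := by
  simp [cesaroMean, ces_iterate_zero, hn]

theorem tendsto_cesaroMean (hf : ContinuousOn f (Ici 0)) (hL : Tendsto f atTop (𝓝 L))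
    (hn : n ≠ 0) : Tendsto (cesaroMean f n) atTop (𝓝 L) := by
  have := (tendsto_finsetSum (Finset.Icc 1 n) fun k _ => tendsto_ces_iterate hf hL k).const_smul
    (n : ℂ)⁻¹
  unfold cesaroMean
  simpa [hn] using this

theorem ces_cesaroMean (hf : ContinuousOn f (Ici 0)) (hx : 0 < x) (n : ℕ) :
    ces (cesaroMean f n) x = cesaroMean f n x + (n : ℂ)⁻¹ • ((ces^[n + 1] f) x - ces f x) := by
  have hint (k : ℕ) : IntervalIntegrable (ces^[k] f) volume 0 x :=
    ((continuousOn_ces_iterate hf k).mono fun t ht =>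
      (uIcc_of_le hx.le ▸ ht).1).intervalIntegrable
  have hlin : ces (cesaroMean f n) x = (n : ℂ)⁻¹ • ∑ k ∈ Finset.Icc 1 n, (ces^[k + 1] f) x := by
    simp only [ces, if_neg hx.ne', cesaroMean, intervalIntegral.integral_smul,
      intervalIntegral.integral_finsetSum fun k _ => hint k, Finset.sum_div, smul_div_assoc,
      Function.iterate_succ_apply']
  rw [hlin, cesaroMean, ← smul_add]
  congr 1
  rcases Nat.eq_zero_or_pos n with rfl | hn
  · simp
  · have := Finset.sum_Icc_sub hn fun k => (ces^[k] f) x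
    rw [Finset.sum_sub_distrib, Function.iterate_one] at this
    rw [← this, add_sub_cancel]

theorem tendsto_ces_cesaroMean_sub (hf : ContinuousOn f (Ici 0)) (hL : Tendsto f atTop (𝓝 L))
    (hx : 0 < x) :
    Tendsto (fun n => ces (cesaroMean f n) x - cesaroMean f n x) atTop (𝓝 0) := by
  obtain ⟨C, hC⟩ := exists_norm_le_of_tendsto hf hL
  simp_rw [ces_cesaroMean hf hx, add_sub_cancel_left]
  refine (tendsto_inv_atTop_nhds_zero_nat (𝕜 := ℂ)).zero_smul_isBoundedUnder_le
    (isBoundedUnder_of ⟨C + C, fun n => (norm_sub_le _ _).trans (add_le_add ?_ ?_)⟩)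
  · exact norm_ces_iterate_le hC (n + 1) x hx.le
  · exact norm_ces_le hC hx.le

theorem not_tendstoUniformlyOn_cesaroMean (hf : ContinuousOn f (Ici 0))
    (hL : Tendsto f atTop (𝓝 L)) (h0 : f 0 ≠ L) (g : ℝ → ℂ) :
    ¬ TendstoUniformlyOn (cesaroMean f) g atTop (Ici 0) := by
  intro hFg
  have hFc := continuousOn_cesaroMean hf
  have hgc : ContinuousOn g (Ici 0) := hFg.continuousOn (Frequently.of_forall hFc)
  have hfix : ∀ x, 0 < x → ces g x = g x := fun x hx => tendsto_nhds_unique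
    (tendsto_ces_of_tendstoUniformlyOn hFc hFg hx)
    (by simpa using (hFg.tendsto_at hx.le).add (tendsto_ces_cesaroMean_sub hf hL hx))
  have hg0 : g 0 = f 0 := tendsto_nhds_unique (hFg.tendsto_at self_mem_Ici)
    (tendsto_const_nhds.congr' ((eventually_ne_atTop 0).mono fun n hn =>
      (cesaroMean_zero hn).symm))
  have hgL : Tendsto g atTop (𝓝 L) :=
    (hFg.tendstoUniformlyOnFilter.mono_right (le_principal_iff.2 (Ici_mem_atTop 0))
      ).tendsto_of_eventually_tendsto
      ((eventually_ne_atTop 0).mono fun n hn => tendsto_cesaroMean hf hL hn) tendsto_const_nhds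
  have hg : Tendsto g atTop (𝓝 (f 0)) := tendsto_const_nhds.congr'
    ((eventually_ge_atTop 0).mono fun x hx => by rw [eqOn_const_of_ces_eq hgc hfix hx, hg0])
  exact h0 (tendsto_nhds_unique hg hgL)

end CesaroMean

/-- The Cesàro operator is not mean ergodic on `C_l([0,∞])`: there is `f ∈ C_l([0,∞])`
whose Cesàro means `(1/n) ∑_{k=1}^n C^k f` do not converge uniformly on `[0,∞)` to any
element of `C_l([0,∞])`. -/
theorem cesaro_Cl_not_mean_ergodic :
    ∃ f : ℝ → ℂ, ContinuousOn f (Set.Ici 0) ∧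
      (∃ L : ℂ, Filter.Tendsto f Filter.atTop (nhds L)) ∧
      ¬ ∃ g : ℝ → ℂ, ContinuousOn g (Set.Ici 0) ∧
        (∃ M : ℂ, Filter.Tendsto g Filter.atTop (nhds M)) ∧
        TendstoUniformlyOn
          (fun (n : ℕ) (x : ℝ) => (n : ℂ)⁻¹ • ∑ k ∈ Finset.Icc 1 n, (ces^[k] f) x)
          g Filter.atTop (Set.Ici 0) := by
  have hcont : ContinuousOn (fun x : ℝ => (Real.exp (-x) : ℂ)) (Ici 0) := by fun_prop
  have hlim : Tendsto (fun x : ℝ => (Real.exp (-x) : ℂ)) atTop (𝓝 0) := by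
    simpa only [Function.comp_def, Complex.ofReal_zero] using
      (Complex.continuous_ofReal.tendsto 0).comp Real.tendsto_exp_neg_atTop_nhds_zero
  refine ⟨_, hcont, ⟨0, hlim⟩, ?_⟩
  rintro ⟨g, -, -, hg⟩
  exact not_tendstoUniformlyOn_cesaroMean hcont hlim (by simp) g hg
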